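/- arXiv:2002.03879 — 4 statements merged into one kernel-verified Lean document; each statement's English description precedes it below -/
import Mathlib

section
/- For real x > 0 and real y ≠ 0, (Γ(x)/|Γ(x+iy)|)^2 ≤ (1 + y²/x²) · sinh(πy)/(πy). -/
/-!
Both sides are infinite products: the limit of Euler's sequence `GammaSeq` gives
`(Γ(x) / |Γ(x + iy)|)² = ∏_{k ≥ 0} (1 + y² / (x + k)²)`, and Euler's sine product at `z = iy`
gives `sinh(πy) / (πy) = ∏_{k ≥ 1} (1 + y² / k²)`. Splitting off the factor `k = 0` of the first
product, the remaining factors are bounded termwise by those of the second, since `k ≤ x + k`.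
-/

open Filter Finset Topology
open scoped Nat

open Complex in
theorem tendsto_prod_one_add_sq_div_succ_sq {y : ℝ} (hy : y ≠ 0) :
    Tendsto (fun n : ℕ ↦ ∏ j ∈ range n, (1 + y ^ 2 / ((j : ℝ) + 1) ^ 2)) atTop
      (𝓝 (Real.sinh (Real.pi * y) / (Real.pi * y))) := by
  have hsin := tendsto_euler_sin_prod' (mul_ne_zero (ofReal_ne_zero.mpr hy) I_ne_zero)
  have hlim : sin (Real.pi * (y * I)) / (Real.pi * (y * I)) =
      ((Real.sinh (Real.pi * y) / (Real.pi * y) : ℝ) : ℂ) := by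
    rw [← mul_assoc, sin_mul_I, mul_div_mul_right _ _ I_ne_zero]
    norm_cast
  rw [hlim] at hsin
  refine tendsto_ofReal_iff.mp (hsin.congr fun n ↦ ?_)
  push_cast
  refine prod_congr rfl fun j _ ↦ ?_
  rw [sineTerm, mul_pow, I_sq]
  ring

namespace Complex

theorem norm_GammaSeq (z : ℂ) {n : ℕ} (hn : n ≠ 0) :
    ‖GammaSeq z n‖ = n ^ z.re * n ! / ∏ j ∈ range (n + 1), ‖z + j‖ := by
  rw [GammaSeq, norm_div, norm_mul, norm_prod, ← ofReal_natCast,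
    norm_cpow_eq_rpow_re_of_pos (by positivity)]
  simp

theorem sq_norm_add_mul_I_add_natCast (x y : ℝ) (j : ℕ) :
    ‖x + y * I + j‖ ^ 2 = (x + j) ^ 2 + y ^ 2 := by
  rw [Complex.sq_norm, show (x + y * I + j : ℂ) = ((x + j : ℝ) : ℂ) + y * I by push_cast; ring,
    normSq_add_mul_I]

theorem sq_norm_GammaSeq_div_norm_GammaSeq {x : ℝ} (hx : 0 < x) (y : ℝ) {n : ℕ} (hn : n ≠ 0) :
    (‖GammaSeq x n‖ / ‖GammaSeq (x + y * I) n‖) ^ 2 =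
      ∏ j ∈ range (n + 1), (1 + y ^ 2 / (x + j) ^ 2) := by
  have hxj (j : ℕ) : 0 < x + j := by positivity
  have hnorm_real (j : ℕ) : ‖(x : ℂ) + j‖ = x + j := by
    rw [← ofReal_natCast, ← ofReal_add, norm_real, Real.norm_of_nonneg (hxj j).le]
  have hpos : (0 : ℝ) < n ^ x * n ! := by positivity
  have hre : (x + y * I).re = x := by simp
  rw [norm_GammaSeq _ hn, norm_GammaSeq _ hn, ofReal_re, hre,
    div_div_div_cancel_left' _ _ hpos.ne', div_pow, ← prod_pow, ← prod_pow, ← prod_div_distrib]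
  refine prod_congr rfl fun j _ ↦ ?_
  rw [sq_norm_add_mul_I_add_natCast, hnorm_real]
  field_simp [(hxj j).ne']

theorem tendsto_prod_one_add_sq_div_add_sq {x : ℝ} (hx : 0 < x) (y : ℝ) :
    Tendsto (fun n : ℕ ↦ ∏ j ∈ range n, (1 + y ^ 2 / (x + j) ^ 2)) atTop
      (𝓝 ((Real.Gamma x / ‖Gamma (x + y * I)‖) ^ 2)) := by
  have hΓ : ‖Gamma (x + y * I)‖ ≠ 0 :=
    norm_ne_zero_iff.mpr (Gamma_ne_zero_of_re_pos (by simpa using hx))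
  have hΓx : ‖Gamma x‖ = Real.Gamma x := by
    rw [Gamma_ofReal, norm_real, Real.norm_of_nonneg (Real.Gamma_pos_of_pos hx).le]
  have hseq :=
    ((GammaSeq_tendsto_Gamma x).norm.div (GammaSeq_tendsto_Gamma (x + y * I)).norm hΓ).pow 2
  rw [hΓx] at hseq
  refine (tendsto_add_atTop_iff_nat 1).mp (hseq.congr' ?_)
  filter_upwards [eventually_ne_atTop 0] with n hn
  exact sq_norm_GammaSeq_div_norm_GammaSeq hx y hn

end Complex

theorem prod_one_add_sq_div_add_sq_le {x : ℝ} (hx : 0 ≤ x) (y : ℝ) (n : ℕ) :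
    ∏ j ∈ range (n + 1), (1 + y ^ 2 / (x + j) ^ 2) ≤
      (1 + y ^ 2 / x ^ 2) * ∏ j ∈ range n, (1 + y ^ 2 / ((j : ℝ) + 1) ^ 2) := by
  rw [prod_range_succ', Nat.cast_zero, add_zero, mul_comm]
  gcongr _ * ∏ j ∈ _, (1 + y ^ 2 / ?_ ^ 2) with j
  push_cast
  linarith

theorem gamma_ratio_sq_le (x y : ℝ) (hx : 0 < x) (hy : y ≠ 0) :
    (Real.Gamma x / ‖Complex.Gamma (x + y * Complex.I)‖) ^ 2 ≤
      (1 + y ^ 2 / x ^ 2) * (Real.sinh (Real.pi * y) / (Real.pi * y)) :=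
  le_of_tendsto_of_tendsto'
    ((tendsto_add_atTop_iff_nat 1).mpr (Complex.tendsto_prod_one_add_sq_div_add_sq hx y))
    ((tendsto_prod_one_add_sq_div_succ_sq hy).const_mul _)
    (prod_one_add_sq_div_add_sq_le hx.le y)
end

section
/- For complex s with Re(s) > 0, integer n ≥ 1, real h > 0, and t > 0, the iterated difference of t ↦ t^{−s} satisfies (−Δ_h)^n (t^{−s}) = (Γ(s+n)/Γ(s)) ∫_{[0,h]^n} (t + u₁ + ⋯ + u_n)^{−s−n} du₁⋯du_n. -/
/-!
Induction on `n`. Since `(-Δ_h)^{n+1} f (t) = (-Δ_h)^n f (t) - (-Δ_h)^n f (t + h)`, the induction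
hypothesis at `t` and at `t + h` turns the step into the difference of two `n`-fold cube integrals
of `x ↦ x^{-(s+n)}`. Pointwise on the cube this difference is `(s + n) ∫₀ʰ (· + v)^{-(s+n)-1} dv`,
and Fubini absorbs the `v`-integral as one more coordinate of the cube; the factor `s + n` is
what turns `Γ(s+n)/Γ(s)` into `Γ(s+n+1)/Γ(s)`.
-/

open MeasureTheory Set fwdDiff

theorem setIntegral_univ_pi_succ_eq_setIntegral_snoc {E : Type*} [NormedAddCommGroup E]
    [NormedSpace ℝ E] {n : ℕ} (I : Set ℝ) {g : (Fin (n + 1) → ℝ) → E}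
    (hg : IntegrableOn g (univ.pi fun _ => I)) :
    ∫ w in univ.pi (fun _ => I), g w =
      ∫ u in univ.pi (fun _ : Fin n => I), ∫ v in I, g (Fin.snoc u v) := by
  set e := (MeasurableEquiv.piFinSuccAbove (fun _ : Fin (n + 1) => ℝ) (Fin.last n)).symm
  have he : MeasurePreserving e :=
    (volume_preserving_piFinSuccAbove (fun _ : Fin (n + 1) => ℝ) (Fin.last n)).symm _
  have he_apply : ∀ p : ℝ × (Fin n → ℝ), e p = Fin.snoc p.2 p.1 := fun p => by
    simp only [e, MeasurableEquiv.piFinSuccAbove_symm_apply, Fin.insertNthEquiv,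
      Fin.insertNth_last', Equiv.coe_fn_mk]
  have hpre : e ⁻¹' univ.pi (fun _ => I) = I ×ˢ univ.pi (fun _ : Fin n => I) := by
    ext ⟨v, u⟩
    simp only [mem_preimage, he_apply, mem_pi, mem_univ, forall_const, Fin.forall_fin_succ',
      Fin.snoc_castSucc, Fin.snoc_last, mem_prod]
    tauto
  rw [← he.integrableOn_comp_preimage e.measurableEmbedding, hpre] at hg
  rw [← he.setIntegral_preimage_emb e.measurableEmbedding, hpre, Measure.volume_eq_prod,
    ← Measure.prod_restrict, integral_prod_symm]
  · simp only [he_apply]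
  · rwa [Measure.prod_restrict, ← Measure.volume_eq_prod]

theorem mul_integral_Icc_ofReal_add_cpow_neg_sub_one {z : ℂ} (hz : z ≠ 0) {y : ℝ} (hy : 0 < y)
    {h : ℝ} (hh : 0 ≤ h) :
    z * ∫ v in Icc 0 h, ((y + v : ℝ) : ℂ) ^ (-z - 1) =
      (y : ℂ) ^ (-z) - ((y + h : ℝ) : ℂ) ^ (-z) := by
  have h0 : (0 : ℝ) ∉ uIcc y (y + h) := by
    rw [uIcc_of_le (by linarith)]
    exact fun h0 => hy.not_ge h0.1
  have hexp : -z - 1 ≠ -1 := fun h1 => hz (by linear_combination -h1)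
  rw [integral_Icc_eq_integral_Ioc, ← intervalIntegral.integral_of_le hh,
    intervalIntegral.integral_comp_add_left (fun x : ℝ => (x : ℂ) ^ (-z - 1)), add_zero,
    integral_cpow (Or.inr ⟨hexp, h0⟩), sub_add_cancel, mul_div_assoc',
    div_eq_iff (by simpa using hz)]
  push_cast
  ring

theorem integrableOn_univ_pi_Icc_ofReal_add_sum_cpow (n : ℕ) (c : ℂ) {t : ℝ} (ht : 0 < t)
    (h : ℝ) :
    IntegrableOn (fun u : Fin n → ℝ => ((t + ∑ i, u i : ℝ) : ℂ) ^ c)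
      (univ.pi fun _ => Icc 0 h) := by
  refine ContinuousOn.integrableOn_compact (isCompact_univ_pi fun _ => isCompact_Icc) ?_
  refine ContinuousOn.cpow_const (by fun_prop) fun u hu => Complex.ofReal_mem_slitPlane.2 ?_
  have : 0 ≤ ∑ i, u i := Finset.sum_nonneg fun i _ => (hu i (mem_univ i)).1
  linarith

theorem mul_setIntegral_univ_pi_Icc_succ_cpow {n : ℕ} {z : ℂ} (hz : z ≠ 0) {t : ℝ} (ht : 0 < t)
    {h : ℝ} (hh : 0 ≤ h) :
    z * ∫ w in univ.pi (fun _ : Fin (n + 1) => Icc 0 h), ((t + ∑ i, w i : ℝ) : ℂ) ^ (-z - 1) =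
      (∫ u in univ.pi (fun _ : Fin n => Icc 0 h), ((t + ∑ i, u i : ℝ) : ℂ) ^ (-z)) -
        ∫ u in univ.pi (fun _ : Fin n => Icc 0 h), ((t + h + ∑ i, u i : ℝ) : ℂ) ^ (-z) := by
  have hcube := fun {t : ℝ} (ht : 0 < t) =>
    integrableOn_univ_pi_Icc_ofReal_add_sum_cpow n (-z) ht h
  rw [setIntegral_univ_pi_succ_eq_setIntegral_snoc _
      (integrableOn_univ_pi_Icc_ofReal_add_sum_cpow _ _ ht h),
    ← integral_const_mul, ← integral_sub (hcube ht) (hcube (by linarith))]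
  refine setIntegral_congr_fun (MeasurableSet.univ_pi fun _ => measurableSet_Icc) fun u hu => ?_
  have hsum : 0 ≤ ∑ i, u i := Finset.sum_nonneg fun i _ => (hu i (mem_univ i)).1
  simp only [Fin.sum_snoc, ← add_assoc]
  rw [mul_integral_Icc_ofReal_add_cpow_neg_sub_one hz (by linarith) hh, add_right_comm t h]

theorem neg_fwdDiff_iter_cpow_general
    (s : ℂ) (hs : 0 < s.re) (n : ℕ) (h : ℝ) (hh : 0 < h)
    (t : ℝ) (ht : 0 < t) :
    ((-1 : ℂ) ^ n) * (fwdDiff h)^[n] (fun x : ℝ => (x : ℂ) ^ (-s)) t =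
      (Complex.Gamma (s + n) / Complex.Gamma s) *
        ∫ u in Set.univ.pi (fun _ : Fin n => Icc (0:ℝ) h),
          ((t + ∑ i, u i : ℝ) : ℂ) ^ (-s - n) := by
  induction n generalizing t with
  | zero => simp [div_self (Complex.Gamma_ne_zero_of_re_pos hs), measureReal_def]
  | succ n ih =>
    have hsn : s + n ≠ 0 := Complex.ne_zero_of_re_pos (by simpa using hs.trans_le (by simp))
    calc (-1 : ℂ) ^ (n + 1) * (fwdDiff h)^[n + 1] (fun x : ℝ => (x : ℂ) ^ (-s)) t
        = (-1 : ℂ) ^ n * (fwdDiff h)^[n] (fun x : ℝ => (x : ℂ) ^ (-s)) t -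
            (-1 : ℂ) ^ n * (fwdDiff h)^[n] (fun x : ℝ => (x : ℂ) ^ (-s)) (t + h) := by
          rw [Function.iterate_succ_apply', fwdDiff]
          ring
      _ = Complex.Gamma (s + n) / Complex.Gamma s *
            ((s + n) * ∫ w in univ.pi (fun _ : Fin (n + 1) => Icc 0 h),
              ((t + ∑ i, w i : ℝ) : ℂ) ^ (-(s + n) - 1)) := by
          rw [ih t ht, ih (t + h) (by linarith),
            mul_setIntegral_univ_pi_Icc_succ_cpow hsn ht hh.le, neg_add', mul_sub]
      _ = _ := by
          rw [Nat.cast_succ, ← add_assoc, Complex.Gamma_add_one _ hsn, ← mul_assoc,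
            div_mul_eq_mul_div, mul_comm _ (s + n), neg_add', sub_sub]

theorem neg_fwdDiff_iter_cpow
    (s : ℂ) (hs : 0 < s.re) (n : ℕ) (hn : 1 ≤ n) (h : ℝ) (hh : 0 < h)
    (t : ℝ) (ht : 0 < t) :
    ((-1 : ℂ) ^ n) * (fwdDiff h)^[n] (fun x : ℝ => (x : ℂ) ^ (-s)) t =
      (Complex.Gamma (s + n) / Complex.Gamma s) *
        ∫ u in Set.univ.pi (fun _ : Fin n => Icc (0:ℝ) h),
          ((t + ∑ i, u i : ℝ) : ℂ) ^ (-s - n) :=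
  neg_fwdDiff_iter_cpow_general s hs n h hh t ht
end

section
/- Let w be a complex number with |w| ≤ 1 and w ≠ 1. Then the Lerch series Φ(s,w,t) = ∑_{n≥0} w^n/(n+t)^s, for t > 0, converges for Re(s) > 0, and the Bernoulli-type polynomials B_n(t) defined by the generating function ∑_{n≥0} B_n(t) u^n/n! = e^{tu}/(1−we^u) satisfy B_0(t) = 1/(1−w), and each B_n(t) is a polynomial of degree n in t with leading coefficient 1/(1−w). -/
open Filter Finset PowerSeries Polynomial

/-!
Convergence is Dirichlet's test: since `‖w‖ ≤ 1` and `w ≠ 1`, the partial sums of `w ^ n` are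
bounded by `2 / ‖w - 1‖`, while `(n + t) ^ (-s)` tends to `0` with summable variation,
`‖Δ (n + t) ^ (-s)‖ ≤ ‖s‖ (n + t) ^ (-Re s - 1)` by the mean value theorem.
Comparing coefficients of `u ^ n / n!` in `(1 - w e^u) ∑ B_n u ^ n / n! = e ^ (X u)` gives the
recursion `(1 - w) B_n = X ^ n + w ∑_{k < n} (n choose k) B_k`, which defines the `B_n` and shows
by induction that `B_n` has degree `n` and leading coefficient `1 / (1 - w)`.
-/

open scoped Nat

theorem cauchySeq_series_smul_of_summable_norm_sub_of_bounded {𝕜 E : Type*} [NormedField 𝕜]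
    [NormedAddCommGroup E] [NormedSpace 𝕜 E] {f : ℕ → 𝕜} {z : ℕ → E} {b : ℝ}
    (hf0 : Tendsto f atTop (nhds 0)) (hfv : Summable fun n => ‖f (n + 1) - f n‖)
    (hzb : ∀ n, ‖∑ i ∈ range n, z i‖ ≤ b) :
    CauchySeq fun n => ∑ i ∈ range n, f i • z i := by
  rw [← cauchySeq_shift 1]
  -- Abel summation, with `Z m = ∑_{i < m} z i`:
  -- `∑_{i ≤ n} f i • z i = f (n + 1) • Z (n + 1) - ∑_{i ≤ n} (f (i + 1) - f i) • Z (i + 1)`.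
  simp_rw [sum_range_by_parts _ _ (Nat.succ _), sub_eq_add_neg, Nat.succ_sub_succ_eq_sub,
    tsub_zero]
  refine (NormedField.tendsto_zero_smul_of_tendsto_zero_of_bounded hf0
    ⟨b, eventually_map.mpr <| Eventually.of_forall fun n => hzb (n + 1)⟩).cauchySeq.add
    (cauchySeq_range_of_norm_bounded (hfv.mul_right b).hasSum.tendsto_sum_nat.cauchySeq
      fun n => ?_).neg
  rw [norm_smul, ← sub_eq_add_neg]
  exact mul_le_mul_of_nonneg_left (hzb _) (norm_nonneg _)

theorem norm_geom_sum_le {𝕜 : Type*} [NormedDivisionRing 𝕜] {w : 𝕜} (hw : ‖w‖ ≤ 1)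
    (hw1 : w ≠ 1) (n : ℕ) : ‖∑ i ∈ range n, w ^ i‖ ≤ 2 / ‖w - 1‖ := by
  rw [geom_sum_eq hw1, norm_div]
  gcongr
  calc ‖w ^ n - 1‖ ≤ ‖w ^ n‖ + ‖(1 : 𝕜)‖ := norm_sub_le _ _
    _ ≤ 1 + 1 := by
      rw [norm_pow, norm_one]
      gcongr
      exact pow_le_one₀ (norm_nonneg w) hw
    _ = 2 := one_add_one_eq_two

namespace Complex

theorem norm_ofReal_cpow_sub_ofReal_cpow_le {a b : ℝ} (ha : 0 < a) (hab : a ≤ b) {z : ℂ}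
    (hz : z.re ≤ 1) : ‖(b : ℂ) ^ z - (a : ℂ) ^ z‖ ≤ ‖z‖ * a ^ (z.re - 1) * (b - a) := by
  have hderiv : ∀ x ∈ Set.Icc a b, HasDerivWithinAt (fun y : ℝ => (y : ℂ) ^ z)
      (z * (x : ℂ) ^ (z - 1)) (Set.Icc a b) x := fun x hx =>
    ((hasStrictDerivAt_cpow_const (ofReal_mem_slitPlane.2 (ha.trans_le hx.1))).hasDerivAt
      |>.comp_ofReal).hasDerivWithinAt
  have hbound : ∀ x ∈ Set.Icc a b, ‖z * (x : ℂ) ^ (z - 1)‖ ≤ ‖z‖ * a ^ (z.re - 1) := by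
    intro x hx
    rw [norm_mul, norm_cpow_eq_rpow_re_of_pos (ha.trans_le hx.1), sub_re, one_re]
    exact mul_le_mul_of_nonneg_left
      (Real.rpow_le_rpow_of_nonpos ha hx.1 (by linarith)) (norm_nonneg z)
  simpa [Real.norm_of_nonneg (sub_nonneg.2 hab)] using
    (convex_Icc a b).norm_image_sub_le_of_norm_hasDerivWithin_le hderiv hbound
      (Set.left_mem_Icc.2 hab) (Set.right_mem_Icc.2 hab)

theorem tendsto_ofReal_natCast_add_cpow_atTop {t : ℝ} (ht : 0 < t) {z : ℂ} (hz : z.re < 0) :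
    Tendsto (fun n : ℕ => ((n + t : ℝ) : ℂ) ^ z) atTop (nhds 0) := by
  rw [tendsto_zero_iff_norm_tendsto_zero]
  have hnorm : ∀ n : ℕ, ‖((n + t : ℝ) : ℂ) ^ z‖ = (n + t) ^ z.re := fun n =>
    norm_cpow_eq_rpow_re_of_pos (by positivity) z
  simp_rw [hnorm]
  exact (tendsto_rpow_neg_atTop (neg_pos.2 hz)).comp
    (tendsto_atTop_add_const_right _ t tendsto_natCast_atTop_atTop) |>.congr fun n => by
      simp

theorem summable_norm_ofReal_natCast_add_cpow_sub {t : ℝ} (ht : 0 < t) {z : ℂ} (hz : z.re < 0) :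
    Summable fun n : ℕ => ‖((((n + 1 : ℕ) : ℝ) + t : ℝ) : ℂ) ^ z - ((n + t : ℝ) : ℂ) ^ z‖ := by
  have hpow : Summable fun n : ℕ => ((n : ℝ) + t) ^ (z.re - 1) := by
    refine ((Real.summable_one_div_nat_add_rpow t (1 - z.re)).2 (by linarith)).congr fun n => ?_
    rw [abs_of_pos (by positivity), one_div, ← Real.rpow_neg (by positivity), neg_sub]
  refine .of_nonneg_of_le (fun n => norm_nonneg _) (fun n => ?_) (hpow.mul_left ‖z‖)
  have h := norm_ofReal_cpow_sub_ofReal_cpow_le (a := n + t) (b := (n + 1 : ℕ) + t)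
    (by positivity) (by push_cast; linarith) (hz.le.trans zero_le_one)
  rw [Nat.cast_succ] at h ⊢
  rwa [add_sub_add_right_eq_sub, add_sub_cancel_left, mul_one] at h

theorem exists_tendsto_sum_div_ofReal_natCast_add_cpow {z : ℕ → ℂ} {b : ℝ}
    (hzb : ∀ n, ‖∑ i ∈ range n, z i‖ ≤ b) {t : ℝ} (ht : 0 < t) {s : ℂ} (hs : 0 < s.re) :
    ∃ L, Tendsto (fun N : ℕ => ∑ n ∈ range N, z n / ((n + t : ℝ) : ℂ) ^ s) atTop (nhds L) := by
  have hs' : (-s).re < 0 := by rwa [neg_re, neg_lt_zero]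
  have h := cauchySeq_series_smul_of_summable_norm_sub_of_bounded
    (tendsto_ofReal_natCast_add_cpow_atTop ht hs')
    (summable_norm_ofReal_natCast_add_cpow_sub ht hs') hzb
  simp_rw [smul_eq_mul, cpow_neg, ← div_eq_inv_mul] at h
  exact cauchySeq_tendsto_of_complete h

end Complex

namespace PowerSeries

theorem mk_one_div_factorial_mul_mul_exp {A : Type*} [CommRing A] [Algebra ℚ A] (a : ℕ → A) :
    mk (fun n => algebraMap ℚ A (1 / n !) * a n) * exp A =
      mk fun n => algebraMap ℚ A (1 / n !) * ∑ k ∈ range (n + 1), (n.choose k : A) * a k := by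
  ext n
  rw [coeff_mul, Nat.sum_antidiagonal_eq_sum_range_succ_mk, coeff_mk, mul_sum]
  refine sum_congr rfl fun k hk => ?_
  have hfac : (1 / k ! : ℚ) * (1 / (n - k)!) = 1 / n ! * n.choose k := by
    rw [Nat.cast_choose ℚ (mem_range_succ_iff.1 hk)]
    field_simp
  rw [coeff_exp, coeff_mk, mul_right_comm, ← map_mul, hfac, map_mul, map_natCast, mul_assoc]

end PowerSeries

namespace Polynomial

variable {K : Type*} [Field K]

noncomputable def lerchBernoulli (w : K) (n : ℕ) : K[X] :=
  C (1 - w)⁻¹ * (X ^ n + C w * ∑ k : Fin n, C (n.choose k : K) * lerchBernoulli w k)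

variable (w : K)

theorem lerchBernoulli_eq (n : ℕ) :
    lerchBernoulli w n =
      C (1 - w)⁻¹ * (X ^ n + C w * ∑ k ∈ range n, C (n.choose k : K) * lerchBernoulli w k) := by
  rw [lerchBernoulli, Fin.sum_univ_eq_sum_range (fun k => C (n.choose k : K) * lerchBernoulli w k)]

theorem lerchBernoulli_zero : lerchBernoulli w 0 = C (1 - w)⁻¹ := by
  rw [lerchBernoulli_eq, sum_range_zero, mul_zero, add_zero, pow_zero, mul_one]

theorem natDegree_lerchBernoulli_le (n : ℕ) : (lerchBernoulli w n).natDegree ≤ n := by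
  induction n using Nat.strong_induction_on with
  | _ n ih =>
    rw [lerchBernoulli_eq]
    refine (natDegree_C_mul_le _ _).trans (natDegree_add_le_of_degree_le (natDegree_X_pow_le n) ?_)
    refine (natDegree_C_mul_le _ _).trans (natDegree_sum_le_of_forall_le _ _ fun k hk => ?_)
    exact (natDegree_C_mul_le _ _).trans ((ih k (mem_range.1 hk)).trans (mem_range.1 hk).le)

theorem coeff_lerchBernoulli_self (n : ℕ) : (lerchBernoulli w n).coeff n = (1 - w)⁻¹ := by
  have hlower : ∀ k ∈ range n, (C (n.choose k : K) * lerchBernoulli w k).coeff n = 0 :=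
    fun k hk => coeff_eq_zero_of_natDegree_lt <|
      ((natDegree_C_mul_le _ _).trans (natDegree_lerchBernoulli_le w k)).trans_lt
        (mem_range.1 hk)
  rw [lerchBernoulli_eq, coeff_C_mul, coeff_add, coeff_X_pow_self, coeff_C_mul, finsetSum_coeff,
    sum_eq_zero hlower, mul_zero, add_zero, mul_one]

variable {w}

theorem natDegree_lerchBernoulli (hw : w ≠ 1) (n : ℕ) : (lerchBernoulli w n).natDegree = n :=
  natDegree_eq_of_le_of_coeff_ne_zero (natDegree_lerchBernoulli_le w n) <| by
    rw [coeff_lerchBernoulli_self]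
    exact inv_ne_zero (sub_ne_zero.2 hw.symm)

theorem leadingCoeff_lerchBernoulli (hw : w ≠ 1) (n : ℕ) :
    (lerchBernoulli w n).leadingCoeff = (1 - w)⁻¹ := by
  rw [leadingCoeff, natDegree_lerchBernoulli hw, coeff_lerchBernoulli_self]

theorem lerchBernoulli_sub_C_mul_sum_choose (hw : w ≠ 1) (n : ℕ) :
    lerchBernoulli w n - C w * ∑ k ∈ range (n + 1), C (n.choose k : K) * lerchBernoulli w k =
      X ^ n := by
  have hrec : C (1 - w) * lerchBernoulli w n =
      X ^ n + C w * ∑ k ∈ range n, C (n.choose k : K) * lerchBernoulli w k := by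
    rw [lerchBernoulli_eq, ← mul_assoc, ← C_mul, mul_inv_cancel₀ (sub_ne_zero.2 hw.symm), C_1,
      one_mul]
  rw [sum_range_succ, Nat.choose_self, Nat.cast_one, C_1, one_mul]
  rw [C_sub, C_1] at hrec
  linear_combination hrec

theorem one_sub_C_mul_exp_mul_mk_lerchBernoulli [CharZero K] (hw : w ≠ 1) :
    (1 - PowerSeries.C (C w) * exp K[X]) *
        PowerSeries.mk (fun n => C (n ! : K)⁻¹ * lerchBernoulli w n) =
      PowerSeries.mk fun n => C (n ! : K)⁻¹ * X ^ n := by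
  have hC : ∀ n : ℕ, C (n ! : K)⁻¹ = algebraMap ℚ K[X] (1 / n !) := fun n => by
    rw [algebraMap_apply, map_div₀, map_one, map_natCast, one_div]
  simp_rw [hC]
  rw [sub_mul, one_mul, mul_assoc, mul_comm (exp _), mk_one_div_factorial_mul_mul_exp]
  refine PowerSeries.ext fun n => ?_
  rw [map_sub, PowerSeries.coeff_C_mul, coeff_mk, coeff_mk, coeff_mk,
    ← lerchBernoulli_sub_C_mul_sum_choose hw n]
  simp_rw [C_eq_natCast]
  ring

end Polynomial

theorem lerch_convergence_and_bernoulli_polys (w : ℂ) (hw : ‖w‖ ≤ 1) (hw1 : w ≠ 1) :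
    (∀ t : ℝ, 0 < t → ∀ s : ℂ, 0 < s.re →
      ∃ L : ℂ, Tendsto
        (fun N : ℕ => ∑ n ∈ Finset.range N, w ^ n / ((n + t : ℝ) : ℂ) ^ s)
        atTop (nhds L)) ∧
    ∃ B : ℕ → Polynomial ℂ,
      ((1 - PowerSeries.C (R := Polynomial ℂ) (Polynomial.C w) *
            PowerSeries.exp (Polynomial ℂ)) *
          PowerSeries.mk (fun n => Polynomial.C ((n.factorial : ℂ))⁻¹ * B n) =
        PowerSeries.mk (fun n => Polynomial.C ((n.factorial : ℂ))⁻¹ * Polynomial.X ^ n)) ∧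
      B 0 = Polynomial.C (1 / (1 - w)) ∧
      ∀ n : ℕ, (B n).natDegree = n ∧ (B n).leadingCoeff = 1 / (1 - w) := by
  refine ⟨fun t ht s hs => Complex.exists_tendsto_sum_div_ofReal_natCast_add_cpow
      (norm_geom_sum_le hw hw1) ht hs,
    lerchBernoulli w, one_sub_C_mul_exp_mul_mk_lerchBernoulli hw1, ?_, fun n => ?_⟩
  · rw [one_div, lerchBernoulli_zero]
  · rw [one_div]
    exact ⟨natDegree_lerchBernoulli hw1 n, leadingCoeff_lerchBernoulli hw1 n⟩
end

section
/- For Re(s) > 1 and t > 0, the series ∑_{n≥0} (−1)^n/(t+n)^s converges absolutely, and the function admits an entire continuation in s; in particular its value at s = −m for an integer m ≥ 0 equals E_m(t)/2 where E_m is the m-th Euler polynomial defined by ∑_{m≥0} E_m(t)u^m/m! = 2e^{tu}/(e^u+1). -/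
open MeasureTheory Set Filter PowerSeries Polynomial

/-!
With `f x = x ^ (-s)` and `Δ` the forward difference, `K` steps of Euler's series transformation
give `∑ (-1)^n f (t+n) = ∑_{k<K} (-1)^k Δ^k f t / 2^(k+1) + (-1)^K / 2^K * ∑ (-1)^n Δ^K f (t+n)`.
By the mean value theorem `Δ^K f x = O(x ^ (-Re s - K))` locally uniformly in `s`, so the
right-hand side is holomorphic on `Re s > 1 - K`; these expressions agree on overlaps and glue to an
entire function. At `s = -m`, `f` is the monomial `x ^ m`, which `Δ^(m+1)` kills, and what remains
is `E_m(t) / 2` with `E_m = ∑_k (-Δ/2)^k x^m = 2 (2 + Δ)⁻¹ x^m`. Hence `E_m(x+1) + E_m(x) = 2 x^m`,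
which is the generating-function identity.
-/

open Finset fwdDiff Topology
open scoped Nat

lemma hasDerivAt_fwdDiff_iter {E : Type*} [NormedAddCommGroup E] [NormedSpace ℝ E]
    {f f' : ℝ → E} {a : ℝ} (hf : ∀ x, a < x → HasDerivAt f (f' x) x) (k : ℕ) :
    ∀ x, a < x → HasDerivAt ((Δ_[1])^[k] f) ((Δ_[1])^[k] f' x) x := by
  induction k with
  | zero => exact hf
  | succ k ih =>
    intro x hx
    simp only [Function.iterate_succ_apply', fwdDiff]
    exact ((ih (x + 1) (by linarith)).comp_add_const x 1).sub (ih x hx)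

lemma fwdDiff_iter_comp_addMonoidHom {M M' G : Type*} [AddCommMonoid M] [AddCommMonoid M']
    [AddCommGroup G] (g : M →+ M') (h : M) (f : M' → G) (k : ℕ) :
    (Δ_[h])^[k] (f ∘ g) = ((Δ_[g h])^[k] f) ∘ g := by
  induction k generalizing f with
  | zero => rfl
  | succ k ih =>
    have hstep : Δ_[h] (f ∘ g) = Δ_[g h] f ∘ g := by ext; simp [fwdDiff]
    rw [Function.iterate_succ_apply, Function.iterate_succ_apply, hstep, ih]

lemma HasSum.neg_one_pow_mul_fwdDiff {R : Type*} [Ring R] [TopologicalSpace R]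
    [IsTopologicalRing R] {u : ℕ → R} {a : R} (h : HasSum (fun n => (-1) ^ n * u n) a) :
    HasSum (fun n => (-1) ^ n * (u (n + 1) - u n)) (u 0 - 2 * a) := by
  have hshift : HasSum (fun n => (-1) ^ (n + 1) * u (n + 1)) (a - u 0) := by
    simpa using (hasSum_nat_add_iff' 1).mpr h
  have hdiff := hshift.neg.sub h
  rw [show -(a - u 0) - a = u 0 - 2 * a by noncomm_ring] at hdiff
  exact hdiff.congr_fun fun n => by rw [pow_succ]; noncomm_ring

lemma Real.rpow_le_rpow_add_rpow {x p q r : ℝ} (hx : 0 < x) (hpq : p ≤ q) (hqr : q ≤ r) :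
    x ^ q ≤ x ^ p + x ^ r := by
  rcases le_total 1 x with h1 | h1
  · linarith [Real.rpow_le_rpow_of_exponent_le h1 hqr, Real.rpow_nonneg hx.le p]
  · linarith [Real.rpow_le_rpow_of_exponent_ge hx h1 hpq, Real.rpow_nonneg hx.le r]

lemma summable_add_nat_rpow_neg {t p : ℝ} (ht : 0 < t) (hp : 1 < p) :
    Summable fun n : ℕ => (t + n) ^ (-p) := by
  refine ((Real.summable_one_div_nat_add_rpow t p).mpr hp).congr fun n => ?_
  rw [abs_of_pos (by positivity), add_comm, one_div, Real.rpow_neg (by positivity)]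

section PolyFwdDiff

variable {R : Type*} [CommRing R]

noncomputable def polyFwdDiff : Module.End R R[X] := taylor 1 - 1

lemma eval_polyFwdDiff_pow (k : ℕ) (p : R[X]) :
    ((polyFwdDiff ^ k) p).eval = (Δ_[1])^[k] p.eval := by
  induction k with
  | zero => rfl
  | succ k ih =>
    ext z
    rw [pow_succ', Module.End.mul_apply, Function.iterate_succ_apply', ← ih]
    simp [polyFwdDiff, taylor_eval, fwdDiff]

lemma polyFwdDiff_pow_eq_zero_of_natDegree_lt [IsDomain R] [Infinite R] {p : R[X]} {k : ℕ}
    (h : p.natDegree < k) : (polyFwdDiff ^ k) p = 0 :=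
  Polynomial.funext fun z => by
    simpa [fwdDiff_iter_eq_zero_of_degree_lt h] using congrFun (eval_polyFwdDiff_pow k p) z

end PolyFwdDiff

lemma algebraMap_inv_factorial_mul_choose {A : Type*} [CommRing A] [Algebra ℚ A] {n k : ℕ}
    (h : k ≤ n) :
    algebraMap ℚ A (k ! : ℚ)⁻¹ * algebraMap ℚ A ((n - k) ! : ℚ)⁻¹ =
      algebraMap ℚ A (n ! : ℚ)⁻¹ * (n.choose k : A) := by
  rw [← map_mul, ← map_natCast (algebraMap ℚ A), ← map_mul, Nat.cast_choose ℚ h]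
  congr 1
  have := Nat.factorial_ne_zero
  field_simp

lemma mk_inv_factorial_mul {A : Type*} [CommRing A] [Algebra ℚ A] (a b : ℕ → A) :
    PowerSeries.mk (fun n => algebraMap ℚ A (n ! : ℚ)⁻¹ * a n) *
        PowerSeries.mk (fun n => algebraMap ℚ A (n ! : ℚ)⁻¹ * b n) =
      PowerSeries.mk (fun n => algebraMap ℚ A (n ! : ℚ)⁻¹ *
        ∑ k ∈ range (n + 1), (n.choose k : A) * (a k * b (n - k))) := by
  ext n
  rw [PowerSeries.coeff_mul, Nat.sum_antidiagonal_eq_sum_range_succ_mk, coeff_mk, mul_sum]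
  refine sum_congr rfl fun k hk => ?_
  simp only [coeff_mk]
  rw [mul_mul_mul_comm, algebraMap_inv_factorial_mul_choose (by grind), mul_assoc]

noncomputable def eulerPoly (m : ℕ) : ℂ[X] :=
  ∑ k ∈ range (m + 1), (((-2⁻¹ : ℂ) • polyFwdDiff) ^ k) (Polynomial.X ^ m)

lemma eulerPoly_eq_sum_of_lt {m N : ℕ} (h : m < N) :
    eulerPoly m = ∑ k ∈ range N, (((-2⁻¹ : ℂ) • polyFwdDiff) ^ k) (Polynomial.X ^ m) := by
  rw [← sum_range_add_sum_Ico _ h, eulerPoly, left_eq_add]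
  refine sum_eq_zero fun k hk => ?_
  rw [_root_.smul_pow, LinearMap.smul_apply,
    polyFwdDiff_pow_eq_zero_of_natDegree_lt
      (by rw [natDegree_X_pow]; exact (mem_Ico.mp hk).1), smul_zero]

lemma taylor_one_eulerPoly_add (m : ℕ) :
    taylor 1 (eulerPoly m) + eulerPoly m = 2 * Polynomial.X ^ m := by
  set x : Module.End ℂ ℂ[X] := (-2⁻¹ : ℂ) • polyFwdDiff
  have hshift : taylor 1 + 1 = (2 : ℂ) • (1 - x) := by
    simp only [x, polyFwdDiff]; module
  have hvanish : (x ^ (m + 1)) (Polynomial.X ^ m) = 0 := by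
    rw [_root_.smul_pow, LinearMap.smul_apply,
      polyFwdDiff_pow_eq_zero_of_natDegree_lt (by simp), smul_zero]
  have heuler : eulerPoly m = (∑ k ∈ range (m + 1), x ^ k) (Polynomial.X ^ m) := by
    rw [eulerPoly, LinearMap.sum_apply]
  calc taylor 1 (eulerPoly m) + eulerPoly m
      = ((taylor 1 + 1 : Module.End ℂ ℂ[X]) * ∑ k ∈ range (m + 1), x ^ k) (Polynomial.X ^ m) := by
        rw [heuler]; rfl
    _ = (2 : ℂ) • (Polynomial.X ^ m - (x ^ (m + 1)) (Polynomial.X ^ m)) := by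
        rw [hshift, smul_mul_assoc, mul_neg_geom_sum]; rfl
    _ = 2 * Polynomial.X ^ m := by
        rw [hvanish, sub_zero, Polynomial.smul_eq_C_mul, map_ofNat]

lemma taylor_one_X_pow (n : ℕ) :
    taylor (1 : ℂ) (Polynomial.X ^ n) = ∑ j ∈ range (n + 1), n.choose j • Polynomial.X ^ j := by
  simp [taylor_apply, add_pow, nsmul_eq_mul, mul_comm]

lemma sum_choose_mul_eulerPoly (n : ℕ) :
    ∑ j ∈ range (n + 1), (n.choose j : ℂ[X]) * eulerPoly j = taylor 1 (eulerPoly n) := by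
  set T : Module.End ℂ ℂ[X] := ∑ k ∈ range (n + 1), ((-2⁻¹ : ℂ) • polyFwdDiff) ^ k
  have heuler : ∀ j ∈ range (n + 1), eulerPoly j = T (Polynomial.X ^ j) := fun j hj => by
    rw [eulerPoly_eq_sum_of_lt (mem_range.mp hj), LinearMap.sum_apply]
  have hcomm : Commute (taylor 1 : Module.End ℂ ℂ[X]) T :=
    Commute.sum_right _ _ _ fun k _ => .pow_right (.smul_right (.sub_right (.refl _)
      (.one_right _)) _) _
  calc ∑ j ∈ range (n + 1), (n.choose j : ℂ[X]) * eulerPoly j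
      = T (taylor 1 (Polynomial.X ^ n)) := by
        rw [taylor_one_X_pow, map_sum]
        refine sum_congr rfl fun j hj => ?_
        rw [heuler j hj, map_nsmul, nsmul_eq_mul]
    _ = taylor 1 (eulerPoly n) := by
        rw [heuler n (self_mem_range_succ n)]; exact congr($hcomm.symm (Polynomial.X ^ n))

lemma exp_add_one_mul_eulerPoly :
    (PowerSeries.exp ℂ[X] + 1) *
        PowerSeries.mk (fun m => Polynomial.C ((m ! : ℂ))⁻¹ * eulerPoly m) =
      2 * PowerSeries.mk (fun m => Polynomial.C ((m ! : ℂ))⁻¹ * Polynomial.X ^ m) := by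
  have hC : ∀ m : ℕ, Polynomial.C ((m ! : ℂ))⁻¹ = algebraMap ℚ ℂ[X] (m ! : ℚ)⁻¹ := fun m => by
    simp [Polynomial.algebraMap_apply]
  have hexp :
      PowerSeries.exp ℂ[X] = PowerSeries.mk fun m => algebraMap ℚ ℂ[X] (m ! : ℚ)⁻¹ * 1 := by
    ext; simp [PowerSeries.exp]
  simp only [hC]
  rw [add_mul, one_mul, mul_comm, hexp, mk_inv_factorial_mul]
  ext n : 1
  rw [← map_ofNat PowerSeries.C, PowerSeries.coeff_C_mul]
  simp only [map_add, coeff_mk, mul_one]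
  rw [sum_choose_mul_eulerPoly, ← mul_add, taylor_one_eulerPoly_add, mul_left_comm]

noncomputable def cpowNegDiff (k : ℕ) (s : ℂ) : ℝ → ℂ :=
  (Δ_[1])^[k] fun x : ℝ => (x : ℂ) ^ (-s)

lemma cpowNegDiff_succ (k : ℕ) (s : ℂ) (x : ℝ) :
    cpowNegDiff (k + 1) s x = cpowNegDiff k s (x + 1) - cpowNegDiff k s x := by
  rw [cpowNegDiff, Function.iterate_succ_apply']; rfl

lemma hasDerivAt_cpowNegDiff (k : ℕ) (s : ℂ) {x : ℝ} (hx : 0 < x) :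
    HasDerivAt (cpowNegDiff k s) (-s * cpowNegDiff k (s + 1) x) x := by
  have hpow : ∀ y : ℝ, 0 < y → HasDerivAt (fun y : ℝ => (y : ℂ) ^ (-s))
      (((-s) • fun y : ℝ => (y : ℂ) ^ (-(s + 1))) y) y := by
    intro y hy
    convert ((Complex.hasStrictDerivAt_cpow_const (c := -s)
      (Or.inl (by simpa using hy))).hasDerivAt).comp_ofReal using 1
    simp only [Pi.smul_apply, smul_eq_mul]
    ring_nf
  have hiter := hasDerivAt_fwdDiff_iter hpow k x hx
  rwa [fwdDiff_iter_const_smul] at hiter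

lemma differentiable_cpowNegDiff (k : ℕ) {x : ℝ} (hx : 0 < x) :
    Differentiable ℂ fun s => cpowNegDiff k s x := by
  induction k generalizing x with
  | zero =>
    exact fun s => (differentiableAt_id.neg).const_cpow (Or.inl (by exact_mod_cast hx.ne'))
  | succ k ih =>
    simp only [cpowNegDiff_succ]
    exact (ih (by linarith)).sub (ih hx)

lemma norm_cpowNegDiff_le (k : ℕ) {s : ℂ} (hs : 0 ≤ s.re + k) {x : ℝ} (hx : 0 < x) :
    ‖cpowNegDiff k s x‖ ≤ (∏ i ∈ range k, ‖s + i‖) * x ^ (-(s.re + k)) := by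
  induction k generalizing s x with
  | zero =>
    simp [cpowNegDiff, Complex.norm_cpow_eq_rpow_re_of_pos hx]
  | succ k ih =>
    have hs' : 0 ≤ (s + 1).re + k := by
      simp only [Complex.add_re, Complex.one_re]; push_cast at hs; linarith
    set C := ‖s‖ * ((∏ i ∈ range k, ‖s + 1 + i‖) * x ^ (-((s + 1).re + k)))
    have hbound : ∀ y ∈ Ico x (x + 1), ‖-s * cpowNegDiff k (s + 1) y‖ ≤ C := by
      intro y hy
      have hy0 : 0 < y := hx.trans_le hy.1
      rw [norm_mul, norm_neg]
      refine mul_le_mul_of_nonneg_left ((ih hs' hy0).trans ?_) (norm_nonneg s)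
      exact mul_le_mul_of_nonneg_left (Real.rpow_le_rpow_of_nonpos hx hy.1 (by linarith))
        (prod_nonneg fun _ _ => norm_nonneg _)
    have hmvt := norm_image_sub_le_of_norm_deriv_le_segment'
      (fun y hy => (hasDerivAt_cpowNegDiff k s (hx.trans_le hy.1)).hasDerivWithinAt) hbound
      (x + 1) (right_mem_Icc.mpr (by linarith))
    rw [← cpowNegDiff_succ, add_sub_cancel_left, mul_one] at hmvt
    refine hmvt.trans_eq ?_
    rw [prod_range_succ']
    simp only [C, Complex.add_re, Complex.one_re, Nat.cast_add, Nat.cast_one, Nat.cast_zero,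
      add_zero]
    rw [prod_congr rfl fun i _ => by rw [add_assoc, add_comm 1 (i : ℂ)]]
    ring_nf

lemma norm_cpowNegDiff_le_of_mem (K : ℕ) {σ R : ℝ} (hσ : 0 ≤ σ + K) {s : ℂ} (hsσ : σ < s.re)
    (hsR : ‖s‖ < R) {x : ℝ} (hx : 0 < x) :
    ‖cpowNegDiff K s x‖ ≤ (R + K) ^ K * (x ^ (-(R + K)) + x ^ (-(σ + K))) := by
  have hre : s.re < R := (Complex.re_le_norm s).trans_lt hsR
  have hRK : 0 ≤ R + K := by linarith [norm_nonneg s]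
  refine (norm_cpowNegDiff_le K (by linarith) hx).trans ?_
  refine mul_le_mul ?_ (Real.rpow_le_rpow_add_rpow hx (by linarith) (by linarith))
    (by positivity) (pow_nonneg hRK K)
  calc ∏ i ∈ range K, ‖s + i‖ ≤ ∏ _i ∈ range K, (R + K) := by
        refine prod_le_prod (fun _ _ => norm_nonneg _) fun i hi => ?_
        have hiK : (i : ℝ) ≤ K := by exact_mod_cast (mem_range.mp hi).le
        linarith [norm_add_le s i, Complex.norm_natCast i]
    _ = (R + K) ^ K := by rw [prod_const, card_range]

lemma summable_norm_cpowNegDiff {t : ℝ} (ht : 0 < t) (K : ℕ) {s : ℂ} (hs : 1 < s.re + K) :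
    Summable fun n : ℕ => ‖cpowNegDiff K s (t + n)‖ :=
  .of_nonneg_of_le (fun _ => norm_nonneg _)
    (fun n => norm_cpowNegDiff_le K (by linarith) (by positivity))
    ((summable_add_nat_rpow_neg ht hs).mul_left _)

section AlternatingHurwitz

variable {t : ℝ}

noncomputable def altSumCpowNegDiff (t : ℝ) (K : ℕ) (s : ℂ) : ℂ :=
  ∑' n : ℕ, (-1) ^ n * cpowNegDiff K s (t + n)

lemma hasSum_altSumCpowNegDiff (ht : 0 < t) (K : ℕ) {s : ℂ} (hs : 1 < s.re + K) :
    HasSum (fun n : ℕ => (-1) ^ n * cpowNegDiff K s (t + n)) (altSumCpowNegDiff t K s) :=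
  (Summable.of_norm <| (summable_norm_cpowNegDiff ht K hs).congr fun n => by simp).hasSum

lemma altSumCpowNegDiff_succ (ht : 0 < t) (K : ℕ) {s : ℂ} (hs : 1 < s.re + K) :
    altSumCpowNegDiff t (K + 1) s = cpowNegDiff K s t - 2 * altSumCpowNegDiff t K s := by
  have h := (hasSum_altSumCpowNegDiff ht K hs).neg_one_pow_mul_fwdDiff
  rw [Nat.cast_zero, add_zero] at h
  refine (h.congr_fun fun n => ?_).tsum_eq
  rw [cpowNegDiff_succ, Nat.cast_succ, add_assoc]

noncomputable def eulerTransform (t : ℝ) (K : ℕ) (s : ℂ) : ℂ :=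
  ∑ k ∈ range K, (-1) ^ k * cpowNegDiff k s t / 2 ^ (k + 1) +
    (-1) ^ K * altSumCpowNegDiff t K s / 2 ^ K

lemma eulerTransform_succ (ht : 0 < t) (K : ℕ) {s : ℂ} (hs : 1 < s.re + K) :
    eulerTransform t (K + 1) s = eulerTransform t K s := by
  rw [eulerTransform, eulerTransform, sum_range_succ, altSumCpowNegDiff_succ ht K hs]
  field_simp
  ring

lemma eulerTransform_eq_of_le (ht : 0 < t) {K L : ℕ} (hKL : K ≤ L) {s : ℂ} (hs : 1 < s.re + K) :
    eulerTransform t L s = eulerTransform t K s := by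
  induction L, hKL using Nat.le_induction with
  | base => rfl
  | succ L hKL ih =>
    rw [eulerTransform_succ ht L (by linarith [(Nat.cast_le (α := ℝ)).mpr hKL]), ih]

noncomputable def alternatingHurwitzZeta (t : ℝ) (s : ℂ) : ℂ :=
  eulerTransform t ⌈2 - s.re⌉₊ s

lemma alternatingHurwitzZeta_eq_eulerTransform (ht : 0 < t) (K : ℕ) {s : ℂ}
    (hs : 1 < s.re + K) : alternatingHurwitzZeta t s = eulerTransform t K s := by
  have hceil : 1 < s.re + ⌈2 - s.re⌉₊ := by linarith [Nat.le_ceil (2 - s.re)]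
  rw [alternatingHurwitzZeta, ← eulerTransform_eq_of_le ht (le_max_left K ⌈2 - s.re⌉₊) hs,
    eulerTransform_eq_of_le ht (le_max_right K _) hceil]

lemma hasSum_alternatingHurwitzZeta (ht : 0 < t) {s : ℂ} (hs : 1 < s.re) :
    HasSum (fun n : ℕ => (-1) ^ n / ((t + n : ℝ) : ℂ) ^ s) (alternatingHurwitzZeta t s) := by
  have hs0 : 1 < s.re + (0 : ℕ) := by simpa using hs
  rw [alternatingHurwitzZeta_eq_eulerTransform ht 0 hs0]
  simpa [eulerTransform, cpowNegDiff, Complex.cpow_neg, div_eq_mul_inv]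
    using hasSum_altSumCpowNegDiff ht 0 hs0

lemma differentiableOn_altSumCpowNegDiff (ht : 0 < t) {K : ℕ} {σ R : ℝ} (hσ : 1 < σ + K)
    (hσR : σ ≤ R) :
    DifferentiableOn ℂ (altSumCpowNegDiff t K) {s | σ < s.re ∧ ‖s‖ < R} := by
  refine Complex.differentiableOn_tsum_of_summable_norm
    (((summable_add_nat_rpow_neg (p := R + K) ht (by linarith)).add
      (summable_add_nat_rpow_neg ht hσ)).mul_left ((R + K) ^ K))
    (fun n => ((differentiable_cpowNegDiff K (by positivity)).const_mul _).differentiableOn)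
    ((isOpen_lt continuous_const Complex.continuous_re).inter
      (isOpen_lt continuous_norm continuous_const))
    fun n s ⟨hsσ, hsR⟩ => ?_
  rw [norm_mul, norm_pow, norm_neg, norm_one, one_pow, one_mul]
  exact norm_cpowNegDiff_le_of_mem K (by linarith) hsσ hsR (by positivity)

lemma differentiable_alternatingHurwitzZeta (ht : 0 < t) :
    Differentiable ℂ (alternatingHurwitzZeta t) := by
  intro s₀
  obtain ⟨K, hK⟩ := exists_nat_gt (2 - s₀.re)
  set U := {s : ℂ | s₀.re - 1 < s.re ∧ ‖s‖ < ‖s₀‖ + 1}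
  have hU : U ∈ 𝓝 s₀ :=
    ((isOpen_lt continuous_const Complex.continuous_re).inter
      (isOpen_lt continuous_norm continuous_const)).mem_nhds
      (show s₀.re - 1 < s₀.re ∧ ‖s₀‖ < ‖s₀‖ + 1 from ⟨sub_one_lt _, lt_add_one _⟩)
  have hdiff : DifferentiableOn ℂ (eulerTransform t K) U :=
    ((Differentiable.fun_sum fun k _ =>
      ((differentiable_cpowNegDiff k ht).const_mul _).div_const _).differentiableOn).add
    (((differentiableOn_altSumCpowNegDiff ht (by linarith)
      (by linarith [Complex.re_le_norm s₀])).const_mul _).div_const _)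
  refine (hdiff.differentiableAt hU).congr_of_eventuallyEq ?_
  filter_upwards [hU] with s hs
  exact alternatingHurwitzZeta_eq_eulerTransform ht K (by linarith [hs.1])

lemma cpowNegDiff_neg_natCast (k m : ℕ) (x : ℝ) :
    cpowNegDiff k (-m) x = ((polyFwdDiff ^ k) (Polynomial.X ^ m)).eval (x : ℂ) := by
  have hpow : (fun x : ℝ => (x : ℂ) ^ (-(-(m : ℂ)))) =
      (Polynomial.X ^ m : ℂ[X]).eval ∘ Complex.ofRealHom.toAddMonoidHom := by
    ext; simp
  rw [cpowNegDiff, hpow, fwdDiff_iter_comp_addMonoidHom,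
    show Complex.ofRealHom.toAddMonoidHom 1 = 1 from map_one Complex.ofRealHom,
    ← eval_polyFwdDiff_pow]
  rfl

lemma alternatingHurwitzZeta_neg_natCast (ht : 0 < t) (m : ℕ) :
    alternatingHurwitzZeta t (-m) = (eulerPoly m).eval (t : ℂ) / 2 := by
  have hs : 1 < (-(m : ℂ)).re + (m + 2 : ℕ) := by push_cast; simp
  have htail : altSumCpowNegDiff t (m + 2) (-m) = 0 := by
    simp [altSumCpowNegDiff, cpowNegDiff_neg_natCast,
      polyFwdDiff_pow_eq_zero_of_natDegree_lt (k := m + 2) (p := Polynomial.X ^ m)]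
  rw [alternatingHurwitzZeta_eq_eulerTransform ht (m + 2) hs, eulerTransform, htail,
    eulerPoly_eq_sum_of_lt (by omega : m < m + 2), mul_zero, zero_div, add_zero, eval_finsetSum,
    sum_div]
  refine sum_congr rfl fun k _ => ?_
  rw [cpowNegDiff_neg_natCast, _root_.smul_pow, LinearMap.smul_apply, eval_smul, smul_eq_mul,
    neg_inv, inv_pow, neg_pow 2, pow_succ]
  field_simp
  rw [← pow_mul, pow_mul', neg_one_sq, one_pow, one_mul]

end AlternatingHurwitz

theorem alternating_hurwitz_entire_and_special_values (t : ℝ) (ht : 0 < t) :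
    (∀ s : ℂ, 1 < s.re →
      Summable fun n : ℕ => ‖((-1 : ℂ)) ^ n / ((t + n : ℝ) : ℂ) ^ s‖) ∧
    ∃ (F : ℂ → ℂ) (E : ℕ → Polynomial ℂ),
      Differentiable ℂ F ∧
      (∀ s : ℂ, 1 < s.re →
        HasSum (fun n : ℕ => ((-1 : ℂ)) ^ n / ((t + n : ℝ) : ℂ) ^ s) (F s)) ∧
      ((PowerSeries.exp (Polynomial ℂ) + 1) *
          PowerSeries.mk (fun m => Polynomial.C ((m.factorial : ℂ))⁻¹ * E m) =
        2 * PowerSeries.mk (fun m => Polynomial.C ((m.factorial : ℂ))⁻¹ * Polynomial.X ^ m)) ∧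
      ∀ m : ℕ, F (-(m : ℂ)) = (E m).eval (t : ℂ) / 2 := by
  refine ⟨fun s hs => ?_, alternatingHurwitzZeta t, eulerPoly,
    differentiable_alternatingHurwitzZeta ht, fun s hs => hasSum_alternatingHurwitzZeta ht hs,
    exp_add_one_mul_eulerPoly, alternatingHurwitzZeta_neg_natCast ht⟩
  refine (summable_norm_cpowNegDiff ht 0 (by simpa using hs)).congr fun n => ?_
  simp [cpowNegDiff, Complex.cpow_neg]
end
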